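/- Let g be a finite-dimensional complex semisimple Lie algebra, and let s ⊂ g be a k-dimensional abelian Lie subalgebra. Then the line [s] = ∧^k s ⊂ ∧^k g is an eigenspace for the Casimir element Cas (normalized via the Killing form) with eigenvalue k. Consequently the maximal eigenvalue of Cas on ∧^k g equals k whenever g contains a k-dimensional abelian subalgebra. -/

import Mathlib

/-!
The Casimir operator `C = ∑ᵢ ρ(bᵢ) ρ(b'ᵢ)` built from derivations obeys the second-order Leibniz
rule `C(uv) = C(u) v + u C(v) + ∑ᵢ (ρ(bᵢ)u · ρ(b'ᵢ)v + ρ(b'ᵢ)u · ρ(bᵢ)v)`. On generators,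
`C(ι x) = ι (∑ᵢ ⁅bᵢ, ⁅b'ᵢ, x⁆⁆) = ι x`, since the adjoint Casimir is the identity:
`K(y, ∑ᵢ ⁅bᵢ, ⁅b'ᵢ, x⁆⁆) = tr(ad x ∘ ad y) = K(y, x)`. Writing `w₁ ∧ ⋯ ∧ w_k` as
`ι w₁ · (w₂ ∧ ⋯ ∧ w_k)` and inducting on `k`, it remains to see that the cross term vanishes.
Invariance of the Casimir tensor `∑ᵢ bᵢ ⊗ b'ᵢ` lets `ad w₁` and `ad wⱼ` trade places on it when
they commute, so the cross term is symmetric under a swap that the alternating wedge product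
turns into a sign.
-/

open ExteriorAlgebra

def LinearMap.BilinForm.IsDualPair {K V κ : Type*} [Field K] [AddCommGroup V] [Module K V]
    [DecidableEq κ] (β : LinearMap.BilinForm K V) (b b' : κ → V) : Prop :=
  ∀ i j, β (b i) (b' j) = if i = j then 1 else 0

namespace LinearMap.BilinForm.IsDualPair

variable {K V κ : Type*} [Field K] [AddCommGroup V] [Module K V] [DecidableEq κ]
  {β : LinearMap.BilinForm K V} {b b' : κ → V}

theorem linearIndependent_left (h : β.IsDualPair b b') : LinearIndependent K b :=
  .of_pairwise_dual_eq_zero_one b (fun i => β.flip (b' i))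
    (fun i j hij => by simp [h j i, hij.symm]) (fun i => by simp [h i i])

theorem linearIndependent_right (h : β.IsDualPair b b') : LinearIndependent K b' :=
  .of_pairwise_dual_eq_zero_one b' (fun i => β (b i))
    (fun i j hij => by simp [h i j, hij]) (fun i => by simp [h i i])

theorem flip (h : β.IsDualPair b b') : β.flip.IsDualPair b' b := fun i j => by
  simp [h j i, eq_comm]

noncomputable def basis (h : β.IsDualPair b b') (hb : Submodule.span K (Set.range b) = ⊤) :
    Module.Basis κ K V :=
  .mk h.linearIndependent_left hb.ge

@[simp]
theorem basis_apply (h : β.IsDualPair b b') (hb : Submodule.span K (Set.range b) = ⊤) (i : κ) :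
    h.basis hb i = b i :=
  Module.Basis.mk_apply _ _ i

theorem basis_repr (h : β.IsDualPair b b') (hb : Submodule.span K (Set.range b) = ⊤)
    (z : V) (i : κ) : (h.basis hb).repr z i = β z (b' i) :=
  (h.basis hb).repr_apply_eq (fun z i => β z (b' i)) (fun _ _ => by ext; simp)
    (fun _ _ => by ext; simp) (fun j => by ext i; simp [h j i, Finsupp.single_apply]) z i

variable [Fintype κ]

theorem sum_smul_left (h : β.IsDualPair b b') (hb : Submodule.span K (Set.range b) = ⊤)
    (z : V) : ∑ i, β z (b' i) • b i = z := by
  simpa [basis_repr] using (h.basis hb).sum_repr z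

theorem span_right_eq_top (h : β.IsDualPair b b') (hb : Submodule.span K (Set.range b) = ⊤) :
    Submodule.span K (Set.range b') = ⊤ :=
  have := Module.Basis.finiteDimensional_of_finite (h.basis hb)
  h.linearIndependent_right.span_eq_top_of_card_eq_finrank'
    (Module.finrank_eq_card_basis (h.basis hb)).symm

theorem sum_smul_right (h : β.IsDualPair b b') (hb : Submodule.span K (Set.range b) = ⊤)
    (z : V) : ∑ i, β (b i) z • b' i = z :=
  h.flip.sum_smul_left (h.span_right_eq_top hb) z

theorem eq_zero_of_forall_apply_eq_zero (h : β.IsDualPair b b')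
    (hb : Submodule.span K (Set.range b) = ⊤) {z : V} (hz : ∀ y, β y z = 0) : z = 0 := by
  simpa [hz] using (h.sum_smul_right hb z).symm

theorem trace_eq_sum (h : β.IsDualPair b b') (hb : Submodule.span K (Set.range b) = ⊤)
    (f : Module.End K V) : LinearMap.trace K V f = ∑ i, β (f (b i)) (b' i) := by
  simp [LinearMap.trace_eq_matrix_trace K (h.basis hb), Matrix.trace, LinearMap.toMatrix_apply,
    basis_repr]

theorem sum_apply_map_eq_of_isAdjointPair {M : Type*} [AddCommGroup M] [Module K M]
    (h : β.IsDualPair b b') (hb : Submodule.span K (Set.range b) = ⊤) (B : V →ₗ[K] V →ₗ[K] M) {f g : Module.End K V}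
    (hfg : LinearMap.IsAdjointPair β β f g) :
    ∑ i, B (f (b i)) (b' i) = ∑ i, B (b i) (g (b' i)) := by
  calc ∑ i, B (f (b i)) (b' i)
      = ∑ i, ∑ m, β (b i) (g (b' m)) • B (b m) (b' i) := by
        refine Finset.sum_congr rfl fun i _ => ?_
        conv_lhs => rw [← h.sum_smul_left hb (f (b i))]
        simp [hfg _]
    _ = ∑ m, B (b m) (g (b' m)) := by
        rw [Finset.sum_comm]
        refine Finset.sum_congr rfl fun m _ => ?_
        conv_rhs => rw [← h.sum_smul_right hb (g (b' m))]
        simp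

end LinearMap.BilinForm.IsDualPair

theorem Module.End.sum_mul_apply_mul {R A κ : Type*} [CommSemiring R] [Semiring A] [Module R A]
    [Fintype κ] (D E : κ → Module.End R A) (hD : ∀ i u v, D i (u * v) = D i u * v + u * D i v)
    (hE : ∀ i u v, E i (u * v) = E i u * v + u * E i v) (u v : A) :
    (∑ i, D i * E i) (u * v) = (∑ i, D i * E i) u * v + u * (∑ i, D i * E i) v
      + ∑ i, (D i u * E i v + E i u * D i v) := by
  simp only [LinearMap.sum_apply, Module.End.mul_apply, hE, map_add, hD, Finset.sum_mul,
    Finset.mul_sum, ← Finset.sum_add_distrib]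
  exact Finset.sum_congr rfl fun i _ => by abel

theorem ExteriorAlgebra.ιMulti_ne_zero_of_linearIndependent {K V : Type*} [Field K]
    [AddCommGroup V] [Module K V] {n : ℕ} {v : Fin n → V} (hv : LinearIndependent K v) :
    ιMulti K n v ≠ 0 := by
  -- the `n`-fold wedge family of `v`, evaluated at the full subset of `Fin n`
  have h := (exteriorPower.ιMulti_family_linearIndependent_field (n := n) hv).ne_zero
    (Set.powersetCard.ofFinEmbEquiv (RelEmbedding.refl (α := Fin n) (· ≤ ·)))
  rwa [exteriorPower.ιMulti_family, Equiv.symm_apply_apply, ne_eq, ← Submodule.coe_eq_zero,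
    exteriorPower.ιMulti_apply_coe] at h

namespace LinearMap.BilinForm.IsDualPair

variable {K L κ : Type*} [Field K] [LieRing L] [LieAlgebra K L] [Fintype κ] [DecidableEq κ]
  {b b' : κ → L} {M : Type*} [AddCommGroup M] [Module K M]

theorem sum_apply_lie_left_eq_neg (h : (killingForm K L).IsDualPair b b')
    (hb : Submodule.span K (Set.range b) = ⊤) (B : L →ₗ[K] L →ₗ[K] M) (x : L) :
    ∑ i, B ⁅x, b i⁆ (b' i) = -∑ i, B (b i) ⁅x, b' i⁆ := by
  refine (h.sum_apply_map_eq_of_isAdjointPair hb B (f := LieAlgebra.ad K L x) (g := -LieAlgebra.ad K L x)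
    fun y z => ?_).trans ?_
  · rw [LinearMap.neg_apply, map_neg]
    exact LieModule.traceForm_apply_lie_apply' K L L x y z
  · simp only [LinearMap.neg_apply, LieAlgebra.ad_apply, map_neg, Finset.sum_neg_distrib]

theorem sum_apply_lie_lie_comm (h : (killingForm K L).IsDualPair b b')
    (hb : Submodule.span K (Set.range b) = ⊤) (B : L →ₗ[K] L →ₗ[K] M) {x y : L}
    (hxy : ⁅x, y⁆ = 0) :
    ∑ i, B ⁅x, b i⁆ ⁅y, b' i⁆ = ∑ i, B ⁅y, b i⁆ ⁅x, b' i⁆ := by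
  have hcomm : ∀ z : L, ⁅y, ⁅x, z⁆⁆ = ⁅x, ⁅y, z⁆⁆ := fun z => by
    rw [leibniz_lie x y z, hxy, zero_lie, zero_add]
  calc ∑ i, B ⁅x, b i⁆ ⁅y, b' i⁆
      = -∑ i, B (b i) ⁅y, ⁅x, b' i⁆⁆ :=
        h.sum_apply_lie_left_eq_neg hb (B.compl₂ (LieAlgebra.ad K L y)) x
    _ = -∑ i, B (b i) ⁅x, ⁅y, b' i⁆⁆ := by simp only [hcomm]
    _ = ∑ i, B ⁅y, b i⁆ ⁅x, b' i⁆ :=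
        (h.sum_apply_lie_left_eq_neg hb (B.compl₂ (LieAlgebra.ad K L x)) y).symm

theorem sum_apply_lie_lie_add_swap_eq_zero (h : (killingForm K L).IsDualPair b b')
    (hb : Submodule.span K (Set.range b) = ⊤) {B : L →ₗ[K] L →ₗ[K] M} (hB : B.IsAlt)
    {x y : L} (hxy : ⁅x, y⁆ = 0) :
    ∑ i, (B ⁅x, b i⁆ ⁅y, b' i⁆ + B ⁅x, b' i⁆ ⁅y, b i⁆) = 0 := by
  rw [Finset.sum_add_distrib, h.sum_apply_lie_lie_comm hb B hxy, ← Finset.sum_add_distrib]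
  exact Finset.sum_eq_zero fun i _ => by rw [← hB.neg ⁅y, b i⁆, add_neg_cancel]

theorem sum_lie_lie_eq_self (h : (killingForm K L).IsDualPair b b')
    (hb : Submodule.span K (Set.range b) = ⊤) (x : L) : ∑ i, ⁅b i, ⁅b' i, x⁆⁆ = x := by
  rw [← sub_eq_zero]
  refine h.eq_zero_of_forall_apply_eq_zero hb fun y => ?_
  have hpair : ∀ i, killingForm K L y ⁅b i, ⁅b' i, x⁆⁆
      = killingForm K L ((LieAlgebra.ad K L x ∘ₗ LieAlgebra.ad K L y) (b i)) (b' i) := fun i => by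
    rw [← LieModule.traceForm_apply_lie_apply, ← LieModule.traceForm_apply_lie_apply,
      LieModule.traceForm_comm, ← LieModule.traceForm_apply_lie_apply]
    rfl
  rw [map_sub, map_sum, Finset.sum_congr rfl fun i _ => hpair i, ← h.trace_eq_sum hb,
    ← killingForm_apply_apply, LieModule.traceForm_comm, sub_self]

theorem sum_ι_lie_mul_ι_lie_eq_zero (h : (killingForm K L).IsDualPair b b')
    (hb : Submodule.span K (Set.range b) = ⊤) {x y : L} (hxy : ⁅x, y⁆ = 0) :
    ∑ i, (ι K ⁅b i, x⁆ * ι K ⁅b' i, y⁆ + ι K ⁅b' i, x⁆ * ι K ⁅b i, y⁆) = 0 := by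
  have hB : ((LinearMap.mul K (ExteriorAlgebra K L)).compl₁₂ (ι K) (ι K)).IsAlt :=
    fun z => ι_sq_zero z
  rw [← h.sum_apply_lie_lie_add_swap_eq_zero hb hB hxy]
  refine Finset.sum_congr rfl fun i _ => ?_
  simp only [← lie_skew (b i) x, ← lie_skew (b' i) y, ← lie_skew (b' i) x, ← lie_skew (b i) y,
    map_neg, neg_mul_neg]
  rfl

variable (ρ : L → Module.End K (ExteriorAlgebra K L))

theorem sum_mul_apply_ι (h : (killingForm K L).IsDualPair b b')
    (hb : Submodule.span K (Set.range b) = ⊤) (hρι : ∀ x y : L, ρ x (ι K y) = ι K ⁅x, y⁆)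
    (x : L) : (∑ i, ρ (b i) * ρ (b' i)) (ι K x) = ι K x := by
  simp only [LinearMap.sum_apply, Module.End.mul_apply, hρι, ← map_sum, h.sum_lie_lie_eq_self hb]

theorem sum_ι_lie_mul_apply_prod_eq_zero (h : (killingForm K L).IsDualPair b b')
    (hb : Submodule.span K (Set.range b) = ⊤) (hρι : ∀ x y : L, ρ x (ι K y) = ι K ⁅x, y⁆)
    (hρmul : ∀ x u v, ρ x (u * v) = ρ x u * v + u * ρ x v) (hρone : ∀ x, ρ x 1 = 0) {x : L} :
    ∀ {n : ℕ} (v : Fin n → L), (∀ j, ⁅x, v j⁆ = 0) →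
      ∑ i, (ι K ⁅b i, x⁆ * ρ (b' i) (List.ofFn fun j => ι K (v j)).prod
        + ι K ⁅b' i, x⁆ * ρ (b i) (List.ofFn fun j => ι K (v j)).prod) = 0
  | 0, _, _ => by simp [hρone]
  | n + 1, v, hv => by
    set P := (List.ofFn fun j : Fin n => ι K (v j.succ)).prod
    have hanti : ∀ a Q, ι K a * (ι K (v 0) * Q) = -(ι K (v 0) * (ι K a * Q)) := fun a Q => by
      rw [← mul_assoc, ← mul_assoc, ← neg_mul, ← neg_eq_of_add_eq_zero_left (ι_add_mul_swap ..)]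
    simp only [List.ofFn_succ, List.prod_cons]
    calc ∑ i, (ι K ⁅b i, x⁆ * ρ (b' i) (ι K (v 0) * P) + ι K ⁅b' i, x⁆ * ρ (b i) (ι K (v 0) * P))
        = (∑ i, (ι K ⁅b i, x⁆ * ι K ⁅b' i, v 0⁆ + ι K ⁅b' i, x⁆ * ι K ⁅b i, v 0⁆)) * P
          - ι K (v 0) * ∑ i, (ι K ⁅b i, x⁆ * ρ (b' i) P + ι K ⁅b' i, x⁆ * ρ (b i) P) := by
          rw [Finset.sum_mul, Finset.mul_sum, ← Finset.sum_sub_distrib]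
          refine Finset.sum_congr rfl fun i _ => ?_
          simp only [hρmul, hρι, mul_add, hanti, add_mul, mul_assoc]
          abel
      _ = 0 := by
          rw [h.sum_ι_lie_mul_ι_lie_eq_zero hb (hv 0),
            sum_ι_lie_mul_apply_prod_eq_zero h hb hρι hρmul hρone _ fun j => hv j.succ,
            zero_mul, mul_zero, sub_zero]

theorem sum_mul_apply_prod_eq_smul (h : (killingForm K L).IsDualPair b b')
    (hb : Submodule.span K (Set.range b) = ⊤) (hρι : ∀ x y : L, ρ x (ι K y) = ι K ⁅x, y⁆)
    (hρmul : ∀ x u v, ρ x (u * v) = ρ x u * v + u * ρ x v) (hρone : ∀ x, ρ x 1 = 0) :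
    ∀ {n : ℕ} (w : Fin n → L), (∀ i j, ⁅w i, w j⁆ = 0) →
      (∑ i, ρ (b i) * ρ (b' i)) (List.ofFn fun j => ι K (w j)).prod
        = (n : K) • (List.ofFn fun j => ι K (w j)).prod
  | 0, _, _ => by simp [hρone]
  | n + 1, w, hw => by
    have hcross := h.sum_ι_lie_mul_apply_prod_eq_zero ρ hb hρι hρmul hρone
      (fun j : Fin n => w j.succ) fun j => hw 0 j.succ
    simp only [List.ofFn_succ, List.prod_cons]
    rw [Module.End.sum_mul_apply_mul _ _ (fun i => hρmul (b i)) (fun i => hρmul (b' i)),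
      h.sum_mul_apply_ι ρ hb hρι, sum_mul_apply_prod_eq_smul h hb hρι hρmul hρone _
        fun i j => hw i.succ j.succ]
    simp only [hρι, hcross, mul_smul_comm, Nat.cast_succ, add_smul, one_smul]
    abel

end LinearMap.BilinForm.IsDualPair

theorem casimir_eigenvalue_of_abelian_subalgebra_general
    {L : Type*} [LieRing L] [LieAlgebra ℂ L]
    {κ : Type*} [Fintype κ] [DecidableEq κ] (b b' : κ → L)
    (hdual : ∀ i j, killingForm ℂ L (b i) (b' j) = if i = j then 1 else 0)
    (hbasis : Submodule.span ℂ (Set.range b) = ⊤)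
    (ρ : L → Module.End ℂ (ExteriorAlgebra ℂ L))
    (hρι : ∀ x y : L, ρ x (ι ℂ y) = ι ℂ ⁅x, y⁆)
    (hρmul : ∀ x u v, ρ x (u * v) = ρ x u * v + u * ρ x v)
    (hρone : ∀ x, ρ x 1 = 0)
    (k : ℕ) (w : Fin k → L) (hw : LinearIndependent ℂ w)
    (habelian : ∀ i j, ⁅w i, w j⁆ = 0) :
    (∑ i, ρ (b i) * ρ (b' i)) ((List.ofFn fun i => ι ℂ (w i)).prod) =
        (k : ℂ) • (List.ofFn fun i => ι ℂ (w i)).prod ∧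
      (List.ofFn fun i => ι ℂ (w i)).prod ≠ 0 ∧
      Module.End.HasEigenvalue (∑ i, ρ (b i) * ρ (b' i)) (k : ℂ) := by
  have heigen := LinearMap.BilinForm.IsDualPair.sum_mul_apply_prod_eq_smul ρ hdual hbasis hρι
    hρmul hρone w habelian
  have hne : (List.ofFn fun i => ι ℂ (w i)).prod ≠ 0 := by
    rw [← ιMulti_apply]
    exact ιMulti_ne_zero_of_linearIndependent hw
  exact ⟨heigen, hne, Module.End.hasEigenvalue_of_hasEigenvector
    ⟨Module.End.mem_eigenspace_iff.mpr heigen, hne⟩⟩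

/-- Let `g` be a finite-dimensional complex semisimple Lie algebra acting on its exterior
algebra by the adjoint action `ρ`, with Casimir operator `Cas = ∑ᵢ ρ(bᵢ) ρ(b'ᵢ)` (`b`, `b'`
dual bases for the Killing form).  If `s ⊂ g` is a `k`-dimensional abelian subalgebra with
basis `w₁, …, w_k`, then the line `[s] = ℂ·(w₁ ∧ ⋯ ∧ w_k) ⊂ ∧^k g` is a (nonzero)
eigenspace of `Cas` with eigenvalue `k`; in particular `k` is an eigenvalue of `Cas` on
`∧^k g`, and by the bound `≤ k` it is the maximal one. -/
theorem casimir_eigenvalue_of_abelian_subalgebra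
    {L : Type*} [LieRing L] [LieAlgebra ℂ L] [Module.Finite ℂ L]
    [LieAlgebra.IsSemisimple ℂ L]
    {κ : Type*} [Fintype κ] [DecidableEq κ] (b b' : κ → L)
    (hdual : ∀ i j, killingForm ℂ L (b i) (b' j) = if i = j then 1 else 0)
    (hbasis : Submodule.span ℂ (Set.range b) = ⊤)
    (ρ : L → Module.End ℂ (ExteriorAlgebra ℂ L))
    (hρι : ∀ x y : L, ρ x (ι ℂ y) = ι ℂ ⁅x, y⁆)
    (hρmul : ∀ x u v, ρ x (u * v) = ρ x u * v + u * ρ x v)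
    (hρone : ∀ x, ρ x 1 = 0)
    (k : ℕ) (w : Fin k → L) (hw : LinearIndependent ℂ w)
    (habelian : ∀ i j, ⁅w i, w j⁆ = 0) :
    (∑ i, ρ (b i) * ρ (b' i)) ((List.ofFn fun i => ι ℂ (w i)).prod) =
        (k : ℂ) • (List.ofFn fun i => ι ℂ (w i)).prod ∧
      (List.ofFn fun i => ι ℂ (w i)).prod ≠ 0 ∧
      Module.End.HasEigenvalue (∑ i, ρ (b i) * ρ (b' i)) (k : ℂ) :=
  casimir_eigenvalue_of_abelian_subalgebra_general b b' hdual hbasis ρ hρι hρmul hρone k w hw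
    habelian
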